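/- arXiv:math/0307040 — 4 statements merged into one kernel-verified Lean document; each statement's English description precedes it below -/
import Mathlib

section
/- Let μ be the Gaussian measure on ℂ with density (1/π)e^{-|w|²}, and let f(z) ∈ L⁰(ℂ,μ) (with the topology of convergence in measure) be the indicator of A(z) = {w : Re w ≤ Re z, Im w ≤ Im z}. Then f is differentiable at every z ∈ ℂ (as a map from ℂ to the topological vector space L⁰) with derivative zero: (f(z') - f(z))/(z' - z) → 0 in measure as z' → z. -/
/-!
The difference quotient at `z'` vanishes outside `A(z') ∆ A(z)`, which lies in the union of the
vertical strip between `Re z` and `Re z'` and the horizontal strip between `Im z` and `Im z'`.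
Both marginals of `μ` are the Gaussian `N(0, 1/2)`, whose density is at most `π^{-1/2}`, so
`μ(A(z') ∆ A(z)) = O(|z' - z|)`. Convergence in measure ignores the size `1/|z' - z|` of the
quotient, only the measure of its support matters.
-/

open MeasureTheory Filter Topology

/-- The Gaussian measure on ℂ with density `(1/π) e^{-|w|²}`. -/
noncomputable def gaussMu : Measure ℂ :=
  volume.withDensity fun w => ENNReal.ofReal (Real.pi⁻¹ * Real.exp (-‖w‖ ^ 2))

/-- The "south-west quadrant" at `z`. -/
def quadrant (z : ℂ) : Set ℂ := {w : ℂ | w.re ≤ z.re ∧ w.im ≤ z.im}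

open ProbabilityTheory Set Function
open scoped symmDiff NNReal

theorem MeasureTheory.MeasurePreserving.map_withDensity_comp {α β : Type*} [MeasurableSpace α]
    [MeasurableSpace β] {μ : Measure α} {ν : Measure β} {e : α ≃ᵐ β} (he : MeasurePreserving e μ ν)
    (f : β → ENNReal) : (μ.withDensity (f ∘ e)).map e = ν.withDensity f := by
  ext s hs
  rw [Measure.map_apply e.measurable hs, withDensity_apply _ (hs.preimage e.measurable),
    withDensity_apply _ hs]
  exact he.setLIntegral_comp_preimage_emb e.measurableEmbedding f s

theorem ProbabilityTheory.gaussianPDFReal_le_inv_sqrt (μ : ℝ) (v : ℝ≥0) (x : ℝ) :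
    gaussianPDFReal μ v x ≤ (√(2 * Real.pi * v))⁻¹ := by
  rw [gaussianPDFReal]
  refine mul_le_of_le_one_right (by positivity) (Real.exp_le_one_iff.mpr ?_)
  exact div_nonpos_of_nonpos_of_nonneg (neg_nonpos.mpr (sq_nonneg _)) (by positivity)

theorem ProbabilityTheory.gaussianReal_Icc_le (μ : ℝ) {v : ℝ≥0} (hv : v ≠ 0) (a b : ℝ) :
    gaussianReal μ v (Icc a b) ≤ ENNReal.ofReal ((√(2 * Real.pi * v))⁻¹ * (b - a)) := by
  calc gaussianReal μ v (Icc a b) = ∫⁻ x in Icc a b, gaussianPDF μ v x := gaussianReal_apply μ hv _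
    _ ≤ ∫⁻ _ in Icc a b, ENNReal.ofReal (√(2 * Real.pi * v))⁻¹ :=
      lintegral_mono fun x => ENNReal.ofReal_le_ofReal (gaussianPDFReal_le_inv_sqrt μ v x)
    _ = ENNReal.ofReal ((√(2 * Real.pi * v))⁻¹ * (b - a)) := by
      rw [setLIntegral_const, Real.volume_Icc, ← ENNReal.ofReal_mul (by positivity)]

theorem ProbabilityTheory.gaussianReal_uIcc_le (μ : ℝ) {v : ℝ≥0} (hv : v ≠ 0) (a b : ℝ) :
    gaussianReal μ v (uIcc a b) ≤ ENNReal.ofReal ((√(2 * Real.pi * v))⁻¹ * |b - a|) := by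
  rw [uIcc, ← max_sub_min_eq_abs]
  exact gaussianReal_Icc_le μ hv _ _

theorem gaussianPDF_zero_two_inv_apply (x : ℝ) :
    gaussianPDF 0 2⁻¹ x = ENNReal.ofReal ((√Real.pi)⁻¹ * Real.exp (-x ^ 2)) := by
  rw [gaussianPDF, gaussianPDFReal]
  congr 4
  · push_cast; ring_nf
  · push_cast; ring

theorem gaussMu_eq_withDensity_gaussianPDF_mul :
    gaussMu = volume.withDensity
      ((fun p : ℝ × ℝ => gaussianPDF 0 2⁻¹ p.1 * gaussianPDF 0 2⁻¹ p.2) ∘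
        Complex.measurableEquivRealProd) := by
  rw [gaussMu]
  congr 1
  ext w
  simp only [comp_apply, Complex.measurableEquivRealProd_apply, gaussianPDF_zero_two_inv_apply]
  rw [← ENNReal.ofReal_mul (by positivity)]
  congr 1
  rw [Complex.sq_norm, Complex.normSq_apply, mul_mul_mul_comm, ← mul_inv,
    Real.mul_self_sqrt Real.pi_pos.le, ← Real.exp_add]
  ring_nf

theorem gaussMu_map_measurableEquivRealProd :
    gaussMu.map Complex.measurableEquivRealProd =
      (gaussianReal 0 2⁻¹).prod (gaussianReal 0 2⁻¹) := by
  rw [gaussMu_eq_withDensity_gaussianPDF_mul,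
    Complex.volume_preserving_equiv_real_prod.map_withDensity_comp,
    gaussianReal_of_var_ne_zero _ (by norm_num), Measure.volume_eq_prod,
    prod_withDensity (measurable_gaussianPDF _ _) (measurable_gaussianPDF _ _)]

theorem gaussMu_map_re : gaussMu.map Complex.re = gaussianReal 0 2⁻¹ := by
  have : Complex.re = Prod.fst ∘ Complex.measurableEquivRealProd := rfl
  rw [this, ← Measure.map_map measurable_fst Complex.measurableEquivRealProd.measurable,
    gaussMu_map_measurableEquivRealProd, Measure.map_fst_prod, measure_univ, one_smul]

theorem gaussMu_map_im : gaussMu.map Complex.im = gaussianReal 0 2⁻¹ := by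
  have : Complex.im = Prod.snd ∘ Complex.measurableEquivRealProd := rfl
  rw [this, ← Measure.map_map measurable_snd Complex.measurableEquivRealProd.measurable,
    gaussMu_map_measurableEquivRealProd, Measure.map_snd_prod, measure_univ, one_smul]

theorem quadrant_symmDiff_subset (z z' : ℂ) :
    quadrant z' ∆ quadrant z ⊆
      Complex.re ⁻¹' uIcc z.re z'.re ∪ Complex.im ⁻¹' uIcc z.im z'.im := by
  intro w
  simp only [mem_symmDiff, quadrant, mem_ofPred_eq, mem_union, mem_preimage, mem_uIcc]
  grind

theorem support_indicator_sub_indicator_subset {α M : Type*} [AddGroup M] (s t : Set α) (c : M) :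
    support (s.indicator (fun _ => c) - t.indicator (fun _ => c)) ⊆ s ∆ t := by
  intro x hx
  by_cases hs : x ∈ s <;> by_cases ht : x ∈ t <;> simp_all [mem_symmDiff]

theorem MeasureTheory.tendstoInMeasure_zero_of_tendsto_measure_support {α ι E : Type*}
    [MeasurableSpace α] [PseudoEMetricSpace E] [Zero E] {μ : Measure α} {l : Filter ι}
    {f : ι → α → E} (h : Tendsto (fun i => μ (support (f i))) l (𝓝 0)) :
    TendstoInMeasure μ f l (fun _ => 0) := by
  intro ε hε
  refine tendsto_of_tendsto_of_tendsto_of_le_of_le tendsto_const_nhds h (fun _ => zero_le)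
    fun i => measure_mono fun x hx hx0 => ?_
  rw [mem_ofPred_eq, hx0, edist_self] at hx
  exact hε.not_ge hx

theorem gaussMu_quadrant_symmDiff_le (z z' : ℂ) :
    gaussMu (quadrant z' ∆ quadrant z) ≤
      ENNReal.ofReal ((√Real.pi)⁻¹ * |z'.re - z.re|) +
        ENNReal.ofReal ((√Real.pi)⁻¹ * |z'.im - z.im|) := by
  have hvar : (2 * Real.pi * ((2⁻¹ : ℝ≥0) : ℝ)) = Real.pi := by push_cast; ring
  calc gaussMu (quadrant z' ∆ quadrant z)
      ≤ gaussMu (Complex.re ⁻¹' uIcc z.re z'.re) + gaussMu (Complex.im ⁻¹' uIcc z.im z'.im) :=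
        (measure_mono (quadrant_symmDiff_subset z z')).trans (measure_union_le _ _)
    _ = gaussianReal 0 2⁻¹ (uIcc z.re z'.re) + gaussianReal 0 2⁻¹ (uIcc z.im z'.im) := by
        rw [← Measure.map_apply Complex.measurable_re measurableSet_uIcc,
          ← Measure.map_apply Complex.measurable_im measurableSet_uIcc, gaussMu_map_re,
          gaussMu_map_im]
    _ ≤ _ := by
        grw [gaussianReal_uIcc_le 0 (by norm_num), gaussianReal_uIcc_le 0 (by norm_num), hvar]

/-- `f(z) = 1_{A(z)} ∈ L⁰(ℂ,μ)` is differentiable at every `z` with derivative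
zero: the difference quotients tend to `0` in measure as `z' → z`. -/
theorem stmt_7 :
    ∀ z : ℂ,
      TendstoInMeasure gaussMu
        (fun z' : ℂ => fun w : ℂ =>
          ((quadrant z').indicator (fun _ => (1 : ℂ)) w -
            (quadrant z).indicator (fun _ => (1 : ℂ)) w) / (z' - z))
        (𝓝[≠] z) (fun _ => (0 : ℂ)) := by
  intro z
  have hlim : Tendsto (fun z' : ℂ => ENNReal.ofReal ((√Real.pi)⁻¹ * |z'.re - z.re|) +
      ENNReal.ofReal ((√Real.pi)⁻¹ * |z'.im - z.im|)) (𝓝[≠] z) (𝓝 0) :=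
    (((ENNReal.continuous_ofReal.comp (by fun_prop)).add
      (ENNReal.continuous_ofReal.comp (by fun_prop))).tendsto' z 0 (by simp)).mono_left
      nhdsWithin_le_nhds
  exact tendstoInMeasure_zero_of_tendsto_measure_support <|
    tendsto_of_tendsto_of_tendsto_of_le_of_le tendsto_const_nhds hlim (fun _ => zero_le) fun z' =>
      (measure_mono <| (support_div _ _).subset.trans <| inter_subset_left.trans <|
        support_indicator_sub_indicator_subset _ _ _).trans (gaussMu_quadrant_symmDiff_le z z')
end

section
/- Let μ be the Gaussian measure on ℂ with density (1/π)e^{-|w|²}, let E = L⁰(ℂ,μ) with the topology of convergence in measure, and define f : ℂ → E by f(z) = indicator of the annulus A(z) = {w : |z| ≤ |w| ≤ 1}. Then f is continuous, not identically zero, and f(z) = 0 for all |z| ≥ 1 (so f has compact support). -/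
/-!
The Gaussian density is at most `1/π`, so `μ {m ≤ |w| ≤ M} ≤ M² - m²`. The functions `f z₁` and
`f z₂` differ only on `A(z₁) ∆ A(z₂)`, which lies in the annulus between `|z₁|` and `|z₂|`; this
gives continuity in measure. Since the density is positive, `μ` charges the open unit disc
inside `A(0)`, whereas for `|z| ≥ 1` the annulus `A(z)` lies in the unit circle, a null set
for `μ ≪ volume`.
-/

open MeasureTheory Filter Topology

/-- `f z` is the indicator of the annulus `A(z) = {w : |z| ≤ |w| ≤ 1}`. -/
noncomputable def fAnn (z : ℂ) : ℂ → ℂ :=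
  ({w : ℂ | ‖z‖ ≤ ‖w‖ ∧ ‖w‖ ≤ 1}).indicator fun _ => (1 : ℂ)

open Set
open scoped symmDiff

theorem Set.Icc_symmDiff_Icc_subset_uIcc {α : Type*} [LinearOrder α] (a b c : α) :
    Icc a c ∆ Icc b c ⊆ uIcc a b := by
  rintro x (⟨⟨hax, hxc⟩, hx⟩ | ⟨⟨hbx, hxc⟩, hx⟩)
  · have hxb : x < b := by by_contra! hbx; exact hx ⟨hbx, hxc⟩
    exact Icc_subset_uIcc ⟨hax, hxb.le⟩
  · have hxa : x < a := by by_contra! hax; exact hx ⟨hax, hxc⟩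
    exact Icc_subset_uIcc' ⟨hbx, hxa.le⟩

theorem MeasureTheory.tendstoInMeasure_indicator_of_tendsto_measure_symmDiff
    {α ι E : Type*} [MeasurableSpace α] [PseudoEMetricSpace E] [Zero E] {μ : Measure α}
    {l : Filter ι} {s : ι → Set α} {t : Set α} (c : E)
    (h : Tendsto (fun i => μ (s i ∆ t)) l (𝓝 0)) :
    TendstoInMeasure μ (fun i => (s i).indicator fun _ => c) l (t.indicator fun _ => c) := by
  intro ε hε
  refine tendsto_of_tendsto_of_tendsto_of_le_of_le tendsto_const_nhds h (fun _ => zero_le)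
    fun i => measure_mono fun x hx => ?_
  by_contra hx'
  have hst : x ∈ s i ↔ x ∈ t := by rw [Set.mem_symmDiff] at hx'; tauto
  have heq : (s i).indicator (fun _ => c) x = t.indicator (fun _ => c) x := by
    by_cases hxt : x ∈ t <;> simp [hxt, hst]
  have hε0 : ε ≤ 0 := by simpa [heq] using hx
  exact hε.not_ge hε0

theorem Complex.volume_norm_preimage_Icc {m M : ℝ} (hm : 0 ≤ m) (hmM : m ≤ M) :
    volume (norm ⁻¹' Icc m M : Set ℂ) = ENNReal.ofReal (Real.pi * (M ^ 2 - m ^ 2)) := by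
  have hdiff : (norm ⁻¹' Icc m M : Set ℂ) = Metric.closedBall 0 M \ Metric.ball 0 m := by
    ext w
    simp [and_comm]
  rw [hdiff, measure_sdiff (Metric.ball_subset_closedBall.trans
      (Metric.closedBall_subset_closedBall hmM)) measurableSet_ball.nullMeasurableSet
      measure_ball_lt_top.ne, Complex.volume_closedBall, Complex.volume_ball,
    ← ENNReal.ofReal_coe_nnreal, NNReal.coe_real_pi, ← ENNReal.ofReal_pow (hm.trans hmM),
    ← ENNReal.ofReal_pow hm, ← ENNReal.ofReal_mul (by positivity),
    ← ENNReal.ofReal_mul (by positivity), ← ENNReal.ofReal_sub _ (by positivity)]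
  ring_nf

theorem gaussMu_le_smul_volume : gaussMu ≤ ENNReal.ofReal Real.pi⁻¹ • volume := by
  rw [gaussMu, ← withDensity_const]
  refine withDensity_mono (ae_of_all _ fun w => ENNReal.ofReal_le_ofReal ?_)
  exact mul_le_of_le_one_right (by positivity)
    (Real.exp_le_one_iff.mpr (neg_nonpos.mpr (by positivity)))

theorem gaussMu_norm_preimage_Icc_le {m M : ℝ} (hm : 0 ≤ m) (hmM : m ≤ M) :
    gaussMu (norm ⁻¹' Icc m M) ≤ ENNReal.ofReal (M ^ 2 - m ^ 2) := by
  calc gaussMu (norm ⁻¹' Icc m M)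
      ≤ (ENNReal.ofReal Real.pi⁻¹ • volume) (norm ⁻¹' Icc m M : Set ℂ) :=
        gaussMu_le_smul_volume _
    _ = ENNReal.ofReal (M ^ 2 - m ^ 2) := by
        rw [Measure.smul_apply, Complex.volume_norm_preimage_Icc hm hmM, smul_eq_mul,
          ← ENNReal.ofReal_mul (by positivity), ← mul_assoc, inv_mul_cancel₀ Real.pi_ne_zero,
          one_mul]

instance : gaussMu.IsOpenPosMeasure := by
  refine Measure.AbsolutelyContinuous.isOpenPosMeasure (μ := volume) ?_
  refine withDensity_absolutelyContinuous' (by fun_prop) (ae_of_all _ fun w => ?_)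
  simp only [ne_eq, ENNReal.ofReal_eq_zero, not_le]
  positivity

theorem tendsto_gaussMu_symmDiff_norm_preimage_Icc (z : ℂ) :
    Tendsto (fun z' : ℂ => gaussMu ((norm ⁻¹' Icc ‖z'‖ 1) ∆ (norm ⁻¹' Icc ‖z‖ 1)))
      (𝓝 z) (𝓝 0) := by
  have hbound (z' : ℂ) : gaussMu ((norm ⁻¹' Icc ‖z'‖ 1) ∆ (norm ⁻¹' Icc ‖z‖ 1)) ≤
      ENNReal.ofReal ((‖z'‖ ⊔ ‖z‖) ^ 2 - (‖z'‖ ⊓ ‖z‖) ^ 2) := by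
    rw [← preimage_symmDiff]
    exact (measure_mono (preimage_mono (Icc_symmDiff_Icc_subset_uIcc _ _ _))).trans
      (gaussMu_norm_preimage_Icc_le (le_inf (norm_nonneg _) (norm_nonneg _)) inf_le_sup)
  have hlim : Tendsto (fun z' : ℂ => ENNReal.ofReal ((‖z'‖ ⊔ ‖z‖) ^ 2 - (‖z'‖ ⊓ ‖z‖) ^ 2))
      (𝓝 z) (𝓝 0) := by
    have hcont : Continuous fun z' : ℂ =>
        ENNReal.ofReal ((‖z'‖ ⊔ ‖z‖) ^ 2 - (‖z'‖ ⊓ ‖z‖) ^ 2) :=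
      ENNReal.continuous_ofReal.comp (by fun_prop)
    simpa using hcont.tendsto z
  exact tendsto_of_tendsto_of_tendsto_of_le_of_le tendsto_const_nhds hlim (fun _ => zero_le)
    hbound

theorem fAnn_eq_indicator (z : ℂ) : fAnn z = (norm ⁻¹' Icc ‖z‖ 1).indicator fun _ => 1 := rfl

theorem fAnn_ae_eq_zero_iff {μ : Measure ℂ} (z : ℂ) :
    (fAnn z =ᵐ[μ] fun _ => 0) ↔ μ (norm ⁻¹' Icc ‖z‖ 1) = 0 := by
  rw [fAnn_eq_indicator, ← Pi.zero_def, indicator_ae_eq_zero,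
    Function.support_const one_ne_zero, inter_univ]

/-- `f` is continuous (into `L⁰(ℂ,μ)` with convergence in measure), not
identically zero in `L⁰`, and `f z = 0` in `L⁰` whenever `|z| ≥ 1`. -/
theorem stmt_10 :
    (∀ z : ℂ, TendstoInMeasure gaussMu fAnn (𝓝 z) (fAnn z)) ∧
      (∃ z : ℂ, ¬ fAnn z =ᵐ[gaussMu] fun _ => (0 : ℂ)) ∧
      (∀ z : ℂ, 1 ≤ ‖z‖ → fAnn z =ᵐ[gaussMu] fun _ => (0 : ℂ)) := by
  refine ⟨fun z => ?_, ⟨0, ?_⟩, fun z hz => ?_⟩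
  · simp only [fAnn_eq_indicator]
    exact tendstoInMeasure_indicator_of_tendsto_measure_symmDiff 1
      (tendsto_gaussMu_symmDiff_norm_preimage_Icc z)
  · have hball : Metric.ball 0 1 ⊆ (norm ⁻¹' Icc ‖(0 : ℂ)‖ 1 : Set ℂ) := fun w hw => by
      simpa using (mem_ball_zero_iff.mp hw).le
    rw [fAnn_ae_eq_zero_iff]
    exact fun h => (Metric.measure_ball_pos gaussMu 0 one_pos).ne' (measure_mono_null hball h)
  · have hsphere : (norm ⁻¹' Icc ‖z‖ 1 : Set ℂ) ⊆ Metric.sphere 0 1 := fun w hw => by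
      simpa using le_antisymm hw.2 (hz.trans hw.1)
    rw [fAnn_ae_eq_zero_iff]
    exact measure_mono_null hsphere
      (withDensity_absolutelyContinuous _ _ (Measure.addHaar_sphere volume 0 1))
end

section
/- Let μ be the Gaussian measure on ℂ with density (1/π)e^{-|w|²}, E = L⁰(ℂ,μ) with convergence in measure, and f(z) = indicator of {w : |z| ≤ |w| ≤ 1}. Then f is differentiable everywhere with derivative zero: for each z ∈ ℂ, (f(z') - f(z))/(z' - z) → 0 in measure as z' → z. -/
/-!
The quotient `(f z' - f z) / (z' - z)` vanishes outside the set where `f z'` and `f z` differ,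
which lies in the shell `{w : |‖w‖ - ‖z‖| ≤ ‖z' - z‖}`. These shells shrink to the circle of
radius `‖z‖`, which is Lebesgue-null and hence null for the Gaussian measure, so their
measure tends to `0`.
-/

open MeasureTheory Filter Topology

theorem MeasureTheory.tendstoInMeasure_of_tendsto_measure_ne {α ι E : Type*}
    [MeasurableSpace α] [EMetricSpace E] {μ : Measure α} {l : Filter ι} {f : ι → α → E}
    {g : α → E} (h : Tendsto (fun i => μ {x | f i x ≠ g x}) l (𝓝 0)) :
    TendstoInMeasure μ f l g :=
  fun _ hε => tendsto_of_tendsto_of_tendsto_of_le_of_le tendsto_const_nhds h (fun _ => zero_le)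
    fun _ => measure_mono fun _ hx => edist_pos.1 (hε.trans_le hx)

theorem tendsto_measure_norm_preimage_closedBall {E : Type*} [NormedAddCommGroup E]
    [ProperSpace E] [MeasurableSpace E] [BorelSpace E] (μ : Measure E) [IsLocallyFiniteMeasure μ]
    {r : ℝ} (hr : μ (Metric.sphere 0 r) = 0) :
    Tendsto (fun δ => μ (norm ⁻¹' Metric.closedBall r δ)) (𝓝[>] 0) (𝓝 0) := by
  have hmap : ∀ s, MeasurableSet s → μ.map norm s = μ (norm ⁻¹' s) := fun _ hs =>
    Measure.map_apply measurable_norm hs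
  have hfin : ∃ R > 0, μ.map norm (Metric.cthickening R {r}) ≠ ⊤ := by
    refine ⟨1, one_pos, ?_⟩
    rw [Metric.cthickening_singleton _ zero_le_one, hmap _ measurableSet_closedBall]
    refine ne_top_of_le_ne_top (isCompact_closedBall (0 : E) (r + 1)).measure_lt_top.ne
      (measure_mono fun w hw => ?_)
    simp only [Set.mem_preimage, Metric.mem_closedBall, Real.dist_eq, dist_zero_right] at hw ⊢
    linarith [le_abs_self (‖w‖ - r)]
  have hsingleton : μ.map norm {r} = 0 := by
    rw [hmap _ (measurableSet_singleton r), ← hr]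
    congr 1
    ext w
    simp
  have hlim := (tendsto_measure_cthickening_of_isClosed hfin isClosed_singleton).mono_left
    (nhdsWithin_le_nhds (s := Set.Ioi 0))
  rw [hsingleton] at hlim
  refine hlim.congr' (eventually_nhdsWithin_of_forall fun δ (hδ : 0 < δ) => ?_)
  rw [Metric.cthickening_singleton _ hδ.le, hmap _ measurableSet_closedBall]

theorem abs_sub_le_abs_sub_of_not_mem_Icc_iff {a b c x : ℝ}
    (h : ¬(x ∈ Set.Icc a c ↔ x ∈ Set.Icc b c)) : |x - a| ≤ |b - a| := by
  simp only [Set.mem_Icc] at h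
  grind

theorem norm_mem_closedBall_of_fAnn_ne {z z' w : ℂ} (h : fAnn z' w ≠ fAnn z w) :
    ‖w‖ ∈ Metric.closedBall ‖z‖ ‖z' - z‖ := by
  have hmem : ¬(‖w‖ ∈ Set.Icc ‖z‖ 1 ↔ ‖w‖ ∈ Set.Icc ‖z'‖ 1) := fun hiff => h <| by
    simp only [fAnn, Set.indicator_apply, Set.mem_ofPred_eq, ← Set.mem_Icc, hiff]
  rw [Metric.mem_closedBall, Real.dist_eq]
  exact (abs_sub_le_abs_sub_of_not_mem_Icc_iff hmem).trans (abs_norm_sub_norm_le z' z)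

theorem gaussMu_sphere (r : ℝ) : gaussMu (Metric.sphere 0 r) = 0 :=
  withDensity_absolutelyContinuous _ _ (Measure.addHaar_sphere volume 0 r)

instance isLocallyFiniteMeasure_gaussMu : IsLocallyFiniteMeasure gaussMu :=
  IsLocallyFiniteMeasure.withDensity_ofReal (by fun_prop)

/-- `f` is differentiable everywhere with derivative zero: the difference
quotients tend to `0` in measure as `z' → z`. -/
theorem stmt_11 :
    ∀ z : ℂ,
      TendstoInMeasure gaussMu
        (fun z' : ℂ => fun w : ℂ => (fAnn z' w - fAnn z w) / (z' - z))
        (𝓝[≠] z) (fun _ => (0 : ℂ)) := by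
  intro z
  have hshell : Tendsto (fun z' => gaussMu (norm ⁻¹' Metric.closedBall ‖z‖ ‖z' - z‖))
      (𝓝[≠] z) (𝓝 0) :=
    (tendsto_measure_norm_preimage_closedBall gaussMu (gaussMu_sphere ‖z‖)).comp
      (tendsto_norm_sub_self_nhdsNE z)
  refine tendstoInMeasure_of_tendsto_measure_ne <| tendsto_of_tendsto_of_tendsto_of_le_of_le
    tendsto_const_nhds hshell (fun _ => zero_le) fun z' => measure_mono fun w hw => ?_
  exact norm_mem_closedBall_of_fAnn_ne fun h => hw (by simp [h])
end

section
/- Let μ be the Gaussian measure on ℂ with density (1/π)e^{-|w|²}, let 1/2 < p < 1, and E = L^p(ℂ,μ) with the metric d(γ,η) = ∫|γ-η|^p dμ. Define f : ℂ → E by f(z) = indicator of A(z) = {w : Re w ≤ Re z}. Then for z₁ ≠ z₂, ∫_ℂ |(f(z₂) - f(z₁))/(z₂ - z₁)|^p dμ ≤ |z₂ - z₁|^{1-p}, and hence the difference quotient (f(z₂)-f(z₁))/(z₂-z₁) tends to 0 in L^p as z₂ → z₁; in particular f is differentiable everywhere with derivative 0. -/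
/-!
Up to sign, `fHalf z₂ - fHalf z₁` is the indicator of the vertical strip over the interval
between `Re z₁` and `Re z₂`. The real part of a `gaussMu`-distributed point has density
`π^{-1/2} e^{-x²} ≤ 1`, so this strip has measure at most `|Re z₂ - Re z₁| ≤ |z₂ - z₁|`, and the
`p`-th power integral of the difference quotient is at most `|z₂ - z₁|^{-p} · |z₂ - z₁|`.
-/

open MeasureTheory Filter Topology

/-- `f z` is the indicator of the half-plane `A(z) = {w : Re w ≤ Re z}`. -/
noncomputable def fHalf (z : ℂ) : ℂ → ℂ :=
  ({w : ℂ | w.re ≤ z.re}).indicator fun _ => (1 : ℂ)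

lemma lintegral_gaussian_density_le_one :
    ∫⁻ y : ℝ, ENNReal.ofReal (Real.pi⁻¹ * Real.exp (-y ^ 2)) ≤ 1 := by
  have hint : Integrable fun y : ℝ => Real.pi⁻¹ * Real.exp (-y ^ 2) := by
    simpa using (integrable_exp_neg_mul_sq one_pos).const_mul Real.pi⁻¹
  have hsqrt : √Real.pi ≤ Real.pi := by
    rw [Real.sqrt_le_left (by positivity)]
    nlinarith [Real.pi_gt_three]
  rw [← ofReal_integral_eq_lintegral_ofReal hint (.of_forall fun y => by positivity),
    integral_const_mul, ← ENNReal.ofReal_one]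
  refine ENNReal.ofReal_le_ofReal ?_
  simpa [inv_mul_le_iff₀ Real.pi_pos] using (integral_gaussian 1).trans_le (by simpa using hsqrt)

lemma gaussMu_re_preimage_le {s : Set ℝ} (hs : MeasurableSet s) :
    gaussMu (Complex.re ⁻¹' s) ≤ volume s := by
  set g : ℝ → ENNReal := fun y => ENNReal.ofReal (Real.pi⁻¹ * Real.exp (-y ^ 2))
  have hpre : Complex.re ⁻¹' s = Complex.measurableEquivRealProd ⁻¹' (s ×ˢ Set.univ) := by
    ext w; simp [Complex.measurableEquivRealProd]
  have hg : Measurable g := by simp only [g]; fun_prop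
  have hdens : ∀ w : ℂ, ENNReal.ofReal (Real.pi⁻¹ * Real.exp (-‖w‖ ^ 2)) ≤ g w.im := by
    intro w
    refine ENNReal.ofReal_le_ofReal ?_
    gcongr Real.pi⁻¹ * Real.exp ?_
    rw [Complex.sq_norm, Complex.normSq_apply]
    nlinarith [sq_nonneg w.re]
  calc gaussMu (Complex.re ⁻¹' s)
      ≤ ∫⁻ w in Complex.re ⁻¹' s, g w.im := by
        rw [gaussMu, withDensity_apply _ (Complex.measurable_re hs)]
        exact setLIntegral_mono (hg.comp Complex.measurable_im) fun w _ => hdens w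
    _ = ∫⁻ q in s ×ˢ Set.univ, g q.2 := by
        rw [hpre]
        exact Complex.volume_preserving_equiv_real_prod.setLIntegral_comp_preimage
          (hs.prod .univ) (hg.comp measurable_snd)
    _ = volume s * ∫⁻ y, g y := by
        rw [Measure.volume_eq_prod,
          setLIntegral_prod (fun q : ℝ × ℝ => g q.2) (hg.comp measurable_snd).aemeasurable,
          Measure.restrict_univ]
        dsimp only
        rw [setLIntegral_const, mul_comm]
    _ ≤ volume s := mul_le_of_le_one_right' lintegral_gaussian_density_le_one

lemma norm_fHalf_sub_fHalf (z₁ z₂ w : ℂ) :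
    ‖fHalf z₂ w - fHalf z₁ w‖ = (Complex.re ⁻¹' Set.uIoc z₁.re z₂.re).indicator 1 w := by
  by_cases h₁ : w.re ≤ z₁.re <;> by_cases h₂ : w.re ≤ z₂.re <;>
    simp [fHalf, Set.indicator, Set.mem_uIoc, h₁, h₂]

lemma lintegral_norm_fHalf_slope_rpow_le {p : ℝ} (hp : 0 < p) {z₁ z₂ : ℂ} (h : z₁ ≠ z₂) :
    ∫⁻ w, ENNReal.ofReal (‖(fHalf z₂ w - fHalf z₁ w) / (z₂ - z₁)‖ ^ p) ∂gaussMu ≤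
      ENNReal.ofReal (‖z₂ - z₁‖ ^ (1 - p)) := by
  set c := ‖z₂ - z₁‖
  have hc : 0 < c := norm_pos_iff.2 (sub_ne_zero.2 h.symm)
  set S := Complex.re ⁻¹' Set.uIoc z₁.re z₂.re
  have hS : MeasurableSet S := Complex.measurable_re measurableSet_uIoc
  have hslope : (fun w => ENNReal.ofReal (‖(fHalf z₂ w - fHalf z₁ w) / (z₂ - z₁)‖ ^ p)) =
      S.indicator fun _ => ENNReal.ofReal (c ^ (-p)) := by
    funext w
    rw [norm_div, norm_fHalf_sub_fHalf]
    by_cases hw : w ∈ S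
    · rw [Set.indicator_of_mem hw, Set.indicator_of_mem hw, Pi.one_apply, one_div,
        Real.inv_rpow hc.le, Real.rpow_neg hc.le]
    · rw [Set.indicator_of_notMem hw, Set.indicator_of_notMem hw, zero_div,
        Real.zero_rpow hp.ne', ENNReal.ofReal_zero]
  calc ∫⁻ w, ENNReal.ofReal (‖(fHalf z₂ w - fHalf z₁ w) / (z₂ - z₁)‖ ^ p) ∂gaussMu
      = ENNReal.ofReal (c ^ (-p)) * gaussMu S := by rw [hslope, lintegral_indicator_const hS]
    _ ≤ ENNReal.ofReal (c ^ (-p)) * ENNReal.ofReal |z₂.re - z₁.re| := by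
        rw [← Real.volume_uIoc]
        gcongr
        exact gaussMu_re_preimage_le measurableSet_uIoc
    _ ≤ ENNReal.ofReal (c ^ (-p)) * ENNReal.ofReal c := by
        gcongr
        rw [← Complex.sub_re]
        exact Complex.abs_re_le_norm _
    _ = ENNReal.ofReal (c ^ (1 - p)) := by
        rw [← ENNReal.ofReal_mul (by positivity), ← Real.rpow_add_one hc.ne', neg_add_eq_sub]

/-- For `1/2 < p < 1`, the `L^p`-F-norm of the difference quotients of `f` is
bounded by `|z₂ - z₁|^{1-p}`; hence the difference quotients tend to `0` in
`L^p(ℂ,μ)` as `z₂ → z₁`, i.e. `f` is differentiable with derivative `0`. -/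
theorem stmt_13 (p : ℝ) (hp : 1 / 2 < p) (hp1 : p < 1) :
    (∀ z₁ z₂ : ℂ, z₁ ≠ z₂ →
      ∫⁻ w, ENNReal.ofReal
          (‖(fHalf z₂ w - fHalf z₁ w) / (z₂ - z₁)‖ ^ p) ∂gaussMu ≤
        ENNReal.ofReal (‖z₂ - z₁‖ ^ (1 - p))) ∧
      ∀ z₁ : ℂ,
        Tendsto
          (fun z₂ : ℂ => ∫⁻ w, ENNReal.ofReal
            (‖(fHalf z₂ w - fHalf z₁ w) / (z₂ - z₁)‖ ^ p) ∂gaussMu)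
          (𝓝[≠] z₁) (𝓝 0) := by
  have hp0 : 0 < p := by linarith
  refine ⟨fun z₁ z₂ h => lintegral_norm_fHalf_slope_rpow_le hp0 h, fun z₁ => ?_⟩
  have hbound : ∀ᶠ z₂ in 𝓝[≠] z₁,
      ∫⁻ w, ENNReal.ofReal (‖(fHalf z₂ w - fHalf z₁ w) / (z₂ - z₁)‖ ^ p) ∂gaussMu ≤
        ENNReal.ofReal (‖z₂ - z₁‖ ^ (1 - p)) :=
    eventually_nhdsWithin_of_forall fun z₂ hz₂ =>
      lintegral_norm_fHalf_slope_rpow_le hp0 (Ne.symm hz₂)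
  have hlim : Tendsto (fun z₂ : ℂ => ENNReal.ofReal (‖z₂ - z₁‖ ^ (1 - p))) (𝓝[≠] z₁) (𝓝 0) := by
    have hcont : Continuous fun z₂ : ℂ => ‖z₂ - z₁‖ ^ (1 - p) :=
      (continuous_norm.comp (continuous_sub_right z₁)).rpow_const fun _ => Or.inr (by linarith)
    simpa [Real.zero_rpow (by linarith : 1 - p ≠ 0)] using
      (ENNReal.tendsto_ofReal (hcont.tendsto z₁)).mono_left nhdsWithin_le_nhds
  exact tendsto_of_tendsto_of_tendsto_of_le_of_le' tendsto_const_nhds hlim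
    (.of_forall fun _ => zero_le) hbound
end
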